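/- In the abstract tensor setting, suppose 1 ≤ m < n and there exist z_1, …, z_n ∈ T with m·z_j ≤ e ≤ z_1 + ⋯ + z_n (weak (m,n)-divisibility of e). If x, y_1, …, y_n ∈ S satisfy x ≤ m·y_j for all j, then x ⊗ e ≤ (y_1 + ⋯ + y_n) ⊗ e. -/

import Mathlib

section AdditiveMap

variable {M N ι : Type*} [AddCommMonoid M] [AddCommMonoid N] (f : M → N)

/- `f` need not send `0` to `0`, so these hold only for nonempty sums and positive multiples. -/
theorem map_sum_of_map_add (hf : ∀ a b, f (a + b) = f a + f b)
    {s : Finset ι} (hs : s.Nonempty) (g : ι → M) :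
    f (∑ i ∈ s, g i) = ∑ i ∈ s, f (g i) := by
  simpa [Multiset.map_map] using
    AddHom.map_multiset_ne_zero_sum ⟨f, hf⟩ (s.val.map g) (by simpa using hs.ne_empty)

theorem map_nsmul_of_map_add (hf : ∀ a b, f (a + b) = f a + f b)
    {k : ℕ} (hk : k ≠ 0) (a : M) : f (k • a) = k • f a := by
  simpa using map_sum_of_map_add f hf (Finset.nonempty_range_iff.2 hk) fun _ ↦ a

end AdditiveMap

/-- Abstract tensor setting.  If `1 ≤ m < n` and there are
`z 1, …, z n ∈ T` with `m • z j ≤ e` for all `j` and `e ≤ z 1 + ⋯ + z n`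
(weak `(m,n)`-divisibility of `e`), and `x, y 1, …, y n ∈ S` satisfy `x ≤ m • y j`
for all `j`, then `x ⊗ e ≤ (y 1 + ⋯ + y n) ⊗ e`. -/
theorem tensor_comparison_weakly_divisible {S T U : Type*}
    [AddCommMonoid S] [PartialOrder S] [IsOrderedAddMonoid S]
    [AddCommMonoid T] [PartialOrder T] [IsOrderedAddMonoid T]
    [AddCommMonoid U] [PartialOrder U] [IsOrderedAddMonoid U]
    (tensor : S → T → U)
    (haddl : ∀ (x₁ x₂ : S) (y : T), tensor (x₁ + x₂) y = tensor x₁ y + tensor x₂ y)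
    (haddr : ∀ (x : S) (y₁ y₂ : T), tensor x (y₁ + y₂) = tensor x y₁ + tensor x y₂)
    (hmono : ∀ (x₁ x₂ : S) (y₁ y₂ : T), x₁ ≤ x₂ → y₁ ≤ y₂ → tensor x₁ y₁ ≤ tensor x₂ y₂)
    (m n : ℕ) (hm : 1 ≤ m) (hmn : m < n)
    (e : T) (z : Fin n → T) (hz₁ : ∀ j, m • z j ≤ e) (hz₂ : e ≤ ∑ j, z j)
    (x : S) (y : Fin n → S) (hxy : ∀ j, x ≤ m • y j) :
    tensor x e ≤ tensor (∑ j, y j) e := by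
  have hm₀ : m ≠ 0 := Nat.one_le_iff_ne_zero.1 hm
  have : NeZero n := ⟨by omega⟩
  have hsmul_comm a b : tensor (m • a) b = tensor a (m • b) := by
    rw [map_nsmul_of_map_add (tensor · b) (haddl · · b) hm₀,
      map_nsmul_of_map_add (tensor a) (haddr a) hm₀]
  calc tensor x e ≤ tensor x (∑ j, z j) := hmono _ _ _ _ le_rfl hz₂
    _ = ∑ j, tensor x (z j) :=
        map_sum_of_map_add (tensor x) (haddr x) Finset.univ_nonempty z
    _ ≤ ∑ j, tensor (m • y j) (z j) :=
        Finset.sum_le_sum fun j _ ↦ hmono _ _ _ _ (hxy j) le_rfl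
    _ = ∑ j, tensor (y j) (m • z j) := by simp only [hsmul_comm]
    _ ≤ ∑ j, tensor (y j) e := Finset.sum_le_sum fun j _ ↦ hmono _ _ _ _ le_rfl (hz₁ j)
    _ = tensor (∑ j, y j) e :=
        (map_sum_of_map_add (tensor · e) (haddl · · e) Finset.univ_nonempty y).symm
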